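/- (Eisenbud–Peeva–Sturmfels) If S is a minimal Gröbner basis in the polynomial ring k[X] (with respect to a monomial order on [X]), then S' = {δ(u·s) : s ∈ S, u ∈ U(s̄)} ∪ {xᵢxⱼ - xⱼxᵢ : i > j} is a Gröbner–Shirshov basis in the free algebra k⟨X⟩ with respect to the lifted order on X*. -/

import Mathlib

/-!
The abelianization `γ : k⟨X⟩ → k[X]` kills the commutators, and modulo commutators (with
controlled leading words) every word `v` reduces to its sorted rearrangement `δ(γ v)`, which is
the lex-least word of its `γ`-fibre. So a polynomial `p` all of whose words lie below `w` is
trivial modulo `(S', w)` as soon as `γ p` lies in the ideal `(S)`: write `p = (p - δ γ p) + δ γ p`,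
divide `γ p` by the Gröbner basis `S` to get `γ p = Σ αᵢ uᵢ sᵢ` with `uᵢ s̄ᵢ` bounded by the
leading monomial of `γ p`, and split each `uᵢ = lo · mid · hi` so that `mid ∈ U(s̄ᵢ)` and
`δ(uᵢ sᵢ) ≡ δ(lo) δ(mid sᵢ) δ(hi)` modulo commutators. Every composition of `S'` has this shape:
its words lie below the ambiguity `w` and `γ` sends it into `(S)`.
-/

/-- A monomial order: a well-founded strict total order compatible with multiplication. -/
def MonOrd {M : Type*} [Monoid M] (lt : M → M → Prop) : Prop :=
  IsStrictTotalOrder M lt ∧ WellFounded lt ∧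
    ∀ u v w₁ w₂ : M, lt u v → lt (w₁ * u * w₂) (w₁ * v * w₂)

/-- `m` is the leading word of `f` with respect to the order `lt`. -/
def IsLeadR {k M : Type*} [Semiring k] (lt : M → M → Prop)
    (f : MonoidAlgebra k M) (m : M) : Prop :=
  m ∈ f.coeff.support ∧ ∀ u ∈ f.coeff.support, u ≠ m → lt u m

/-- `f` is monic: its leading coefficient is `1`. -/
def MonicR {k M : Type*} [Semiring k] (lt : M → M → Prop) (f : MonoidAlgebra k M) : Prop :=
  ∃ m, IsLeadR lt f m ∧ f.coeff m = 1

/-- The monomial `m` viewed as an element of the monoid algebra. -/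
noncomputable def mono (k : Type*) {M : Type*} [Semiring k] [Monoid M] (m : M) :
    MonoidAlgebra k M := MonoidAlgebra.of k M m

/-- `h` is trivial modulo `(S, w)`: it is a linear combination `Σ αᵢ aᵢ sᵢ bᵢ`
with `sᵢ ∈ S` and leading words `aᵢ s̄ᵢ bᵢ < w`. -/
def TrivModR {k M : Type*} [Semiring k] [Monoid M] (lt : M → M → Prop)
    (S : Set (MonoidAlgebra k M)) (w : M) (h : MonoidAlgebra k M) : Prop :=
  ∃ (n : ℕ) (α : Fin n → k) (a b : Fin n → M) (s : Fin n → MonoidAlgebra k M),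
    (∀ i, s i ∈ S) ∧
    h = ∑ i, α i • (mono k (a i) * s i * mono k (b i)) ∧
    ∀ i, ∃ m, IsLeadR lt (s i) m ∧ lt (a i * m * b i) w

/-- Gröbner–Shirshov basis in a free associative algebra `k⟨Z⟩`:
all intersection and inclusion compositions are trivial. -/
def FIsGSB {k Z : Type*} [Ring k] (lt : FreeMonoid Z → FreeMonoid Z → Prop)
    (S : Set (MonoidAlgebra k (FreeMonoid Z))) : Prop :=
  (∀ s ∈ S, MonicR lt s) ∧
  ∀ f ∈ S, ∀ g ∈ S, ∀ mf mg : FreeMonoid Z, IsLeadR lt f mf → IsLeadR lt g mg →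
    ((∀ a b : FreeMonoid Z, mf * b = a * mg →
        (mf * b).length < mf.length + mg.length →
        TrivModR lt S (mf * b) (f * mono k b - mono k a * g)) ∧
     (∀ a b : FreeMonoid Z, mf = a * mg * b →
        TrivModR lt S mf (f - mono k a * g * mono k b)))

/-- the deg-lex order on words induced by an order on letters -/
def degLex {A : Type*} (ltA : A → A → Prop) (u v : FreeMonoid A) : Prop :=
  u.length < v.length ∨ (u.length = v.length ∧ List.Lex ltA u.toList v.toList)

/-- Normal words of `k⟨X⟩ ⊗ k⟨Y⟩`: the monoid `X* × Y*`
(whose multiplication is `(u^X u^Y)(v^X v^Y) = u^X v^X u^Y v^Y`). -/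
abbrev NW (X Y : Type*) := FreeMonoid X × FreeMonoid Y

/-- the (deg-)lex order on `N = X*Y*` built from orders on `X*` and `Y*`:
`u > v` iff `u^X > v^X` or (`u^X = v^X` and `u^Y > v^Y`). -/
def lexNW {X Y : Type*} (ltX : FreeMonoid X → FreeMonoid X → Prop)
    (ltY : FreeMonoid Y → FreeMonoid Y → Prop) (u v : NW X Y) : Prop :=
  ltX u.1 v.1 ∨ (u.1 = v.1 ∧ ltY u.2 v.2)

/-- All compositions `(f,g)_w = p` in `k⟨X⟩ ⊗ k⟨Y⟩`, where `mf, mg` are the leading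
words of `f, g`.  The cases are: 1.1 `X`-inclusion only, 1.2 `Y`-inclusion only,
1.3 `X,Y`-inclusion, 1.4 `X,Y`-skew-inclusion, 2.1 `X`-intersection only,
2.2 `Y`-intersection only, 2.3 `X,Y`-intersection, 2.4 `X,Y`-skew-intersection,
3.1 `X`-inclusion and `Y`-intersection, 3.2 `X`-intersection and `Y`-inclusion. -/
def IsComp {k X Y : Type*} [Ring k] (f g : MonoidAlgebra k (NW X Y))
    (mf mg : NW X Y) (p : MonoidAlgebra k (NW X Y)) (w : NW X Y) : Prop :=
  let e : NW X Y → MonoidAlgebra k (NW X Y) := fun m => mono k m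
  let fx := mf.1; let fy := mf.2; let gx := mg.1; let gy := mg.2
  -- 1.1 X-inclusion only
  (∃ (a b : FreeMonoid X) (c : FreeMonoid Y), fx = a * gx * b ∧
     ((w = (fx, fy * c * gy) ∧ p = f * e (1, c * gy) - e (a, fy * c) * g * e (b, 1)) ∨
      (w = (fx, gy * c * fy) ∧ p = e (1, gy * c) * f - e (a, 1) * g * e (b, c * fy)))) ∨
  -- 1.2 Y-inclusion only
  (∃ (a : FreeMonoid X) (c d : FreeMonoid Y), fy = c * gy * d ∧
     ((w = (fx * a * gx, fy) ∧ p = f * e (a * gx, 1) - e (fx * a, c) * g * e (1, d)) ∨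
      (w = (gx * a * fx, fy) ∧ p = e (gx * a, 1) * f - e (1, c) * g * e (a * fx, d)))) ∨
  -- 1.3 X,Y-inclusion
  (∃ (a b : FreeMonoid X) (c d : FreeMonoid Y), fx = a * gx * b ∧ fy = c * gy * d ∧
     w = (fx, fy) ∧ p = f - e (a, c) * g * e (b, d)) ∨
  -- 1.4 X,Y-skew-inclusion
  (∃ (a b : FreeMonoid X) (c d : FreeMonoid Y), fx = a * gx * b ∧ gy = c * fy * d ∧
     w = (fx, gy) ∧ p = e (1, c) * f * e (1, d) - e (a, 1) * g * e (b, 1)) ∨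
  -- 2.1 X-intersection only
  (∃ (a b : FreeMonoid X) (c : FreeMonoid Y), fx * a = b * gx ∧
     (fx * a).length < fx.length + gx.length ∧
     ((w = (fx * a, fy * c * gy) ∧ p = f * e (a, c * gy) - e (b, fy * c) * g) ∨
      (w = (fx * a, gy * c * fy) ∧
        p = e (1, gy * c) * f * e (a, 1) - e (b, 1) * g * e (1, c * fy)))) ∨
  -- 2.2 Y-intersection only
  (∃ (a : FreeMonoid X) (c d : FreeMonoid Y), fy * c = d * gy ∧
     (fy * c).length < fy.length + gy.length ∧
     ((w = (fx * a * gx, fy * c) ∧ p = f * e (a * gx, c) - e (fx * a, d) * g) ∨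
      (w = (gx * a * fx, fy * c) ∧
        p = e (gx * a, 1) * f * e (1, c) - e (1, d) * g * e (a * fx, 1)))) ∨
  -- 2.3 X,Y-intersection
  (∃ (a b : FreeMonoid X) (c d : FreeMonoid Y), fx * a = b * gx ∧ fy * c = d * gy ∧
     (fx * a).length < fx.length + gx.length ∧ (fy * c).length < fy.length + gy.length ∧
     w = (fx * a, fy * c) ∧ p = f * e (a, c) - e (b, d) * g) ∨
  -- 2.4 X,Y-skew-intersection
  (∃ (a b : FreeMonoid X) (c d : FreeMonoid Y), fx * a = b * gx ∧ c * fy = gy * d ∧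
     (fx * a).length < fx.length + gx.length ∧ (c * fy).length < fy.length + gy.length ∧
     w = (fx * a, c * fy) ∧ p = e (1, c) * f * e (a, 1) - e (b, 1) * g * e (1, d)) ∨
  -- 3.1 X-inclusion and Y-intersection
  (∃ (a b : FreeMonoid X) (c d : FreeMonoid Y), fx = a * gx * b ∧
     ((fy * c = d * gy ∧ (fy * c).length < fy.length + gy.length ∧
        w = (fx, fy * c) ∧ p = f * e (1, c) - e (a, d) * g * e (b, 1)) ∨
      (c * fy = gy * d ∧ (c * fy).length < fy.length + gy.length ∧
        w = (fx, c * fy) ∧ p = e (1, c) * f - e (a, 1) * g * e (b, d)))) ∨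
  -- 3.2 X-intersection and Y-inclusion
  (∃ (a b : FreeMonoid X) (c d : FreeMonoid Y), fx * a = b * gx ∧
     (fx * a).length < fx.length + gx.length ∧
     ((fy = c * gy * d ∧ w = (fx * a, fy) ∧ p = f * e (a, 1) - e (b, c) * g * e (1, d)) ∨
      (gy = c * fy * d ∧ w = (fx * a, gy) ∧ p = e (1, c) * f * e (a, d) - e (b, 1) * g)))

/-- Gröbner–Shirshov basis in `k⟨X⟩ ⊗ k⟨Y⟩`: a set of monic polynomials
all of whose compositions are trivial. -/
def IsGSB {k X Y : Type*} [Ring k] (lt : NW X Y → NW X Y → Prop)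
    (S : Set (MonoidAlgebra k (NW X Y))) : Prop :=
  (∀ s ∈ S, MonicR lt s) ∧
  ∀ f ∈ S, ∀ g ∈ S, ∀ (mf mg : NW X Y) (p : MonoidAlgebra k (NW X Y)) (w : NW X Y),
    IsLeadR lt f mf → IsLeadR lt g mg → IsComp f g mf mg p w → TrivModR lt S w p

/-- the abelianization map `γ : X* → [X]`, with `[X]` the free commutative monoid
on `X` realized as `Multiplicative (Multiset X)`. -/
def gam {X : Type*} (u : FreeMonoid X) : Multiplicative (Multiset X) :=
  Multiplicative.ofAdd (↑u.toList : Multiset X)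

/-- the order on `X*` lifted from a monomial order on `[X]`:
`u > v` iff `γ(u) > γ(v)`, or `γ(u) = γ(v)` and `u >_lex v`. -/
def liftOrd {X : Type*} [LinearOrder X]
    (ltC : Multiplicative (Multiset X) → Multiplicative (Multiset X) → Prop)
    (u v : FreeMonoid X) : Prop :=
  ltC (gam u) (gam v) ∨ (gam u = gam v ∧ List.Lex (· < ·) u.toList v.toList)

/-- `δ` on monomials: the weakly increasing word representing a commutative monomial. -/
noncomputable def dword {X : Type*} [LinearOrder X] (m : Multiplicative (Multiset X)) :
    FreeMonoid X :=
  FreeMonoid.ofList (Multiset.sort (Multiplicative.toAdd m) (· ≤ ·))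

/-- the lexicographic splitting `δ : k[X] → k⟨X⟩`. -/
noncomputable def deltaMap {k X : Type*} [Semiring k] [LinearOrder X]
    (f : MonoidAlgebra k (Multiplicative (Multiset X))) :
    MonoidAlgebra k (FreeMonoid X) :=
  MonoidAlgebra.ofCoeff (Finsupp.mapDomain dword f.coeff)

/-- the set `S₁ = {xᵢxⱼ - xⱼxᵢ : xᵢ > xⱼ}` of commutators in `k⟨X⟩`. -/
noncomputable def commSet (k X : Type*) [Ring k] [LinearOrder X] :
    Set (MonoidAlgebra k (FreeMonoid X)) :=
  {p | ∃ i j : X, j < i ∧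
    p = mono k (FreeMonoid.of i * FreeMonoid.of j) - mono k (FreeMonoid.of j * FreeMonoid.of i)}

/-- `U(m)`: commutative monomials in the variables strictly between the least and the
greatest variable occurring in `m`. -/
def UU {X : Type*} [LinearOrder X] (m : Multiplicative (Multiset X)) :
    Set (Multiplicative (Multiset X)) :=
  {u | ∀ y ∈ Multiplicative.toAdd u,
     (∃ z ∈ Multiplicative.toAdd m, z < y) ∧ (∃ z ∈ Multiplicative.toAdd m, y < z)}

/-- Normal words of `k[X] ⊗ k⟨Y⟩`: the monoid `[X]Y*`. -/
abbrev CW (X Y : Type*) := Multiplicative (Multiset X) × FreeMonoid Y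

/-- the order on `[X]Y*`: compare the `Y`-part first, then the `[X]`-part. -/
def cwOrd {X Y : Type*}
    (ltC : Multiplicative (Multiset X) → Multiplicative (Multiset X) → Prop)
    (ltY : FreeMonoid Y → FreeMonoid Y → Prop) (u v : CW X Y) : Prop :=
  ltY u.2 v.2 ∨ (u.2 = v.2 ∧ ltC u.1 v.1)

/-- the order on `X*Y*` lifted from the order on `[X]Y*`, breaking ties by `lex`
on the `X`-component. -/
def liftNW {X Y : Type*} [LinearOrder X]
    (ltC : Multiplicative (Multiset X) → Multiplicative (Multiset X) → Prop)
    (ltY : FreeMonoid Y → FreeMonoid Y → Prop) (u v : NW X Y) : Prop :=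
  cwOrd ltC ltY (gam u.1, u.2) (gam v.1, v.2) ∨
    ((gam u.1 = gam v.1 ∧ u.2 = v.2) ∧ List.Lex (· < ·) u.1.toList v.1.toList)

/-- `δ : k[X] ⊗ k⟨Y⟩ → k⟨X⟩ ⊗ k⟨Y⟩`, the lexicographic splitting extended by the
identity on `Y`-words. -/
noncomputable def deltaNW {k X Y : Type*} [Semiring k] [LinearOrder X]
    (f : MonoidAlgebra k (CW X Y)) : MonoidAlgebra k (NW X Y) :=
  MonoidAlgebra.ofCoeff (Finsupp.mapDomain (fun m : CW X Y => ((dword m.1, m.2) : NW X Y)) f.coeff)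

/-- Mikhalev–Zolotykh compositions in `k[X] ⊗ k⟨Y⟩`: inclusion `C₁`, overlap `C₂`
and external `C₃` compositions, where `mf`, `mg` are the leading words of `f`, `g`,
and `L = lcm(mf^X, mg^X)`. -/
def MZComp {k X Y : Type*} [Ring k] [DecidableEq X]
    (ltC : Multiplicative (Multiset X) → Multiplicative (Multiset X) → Prop)
    (f g : MonoidAlgebra k (CW X Y)) (mf mg : CW X Y)
    (p : MonoidAlgebra k (CW X Y)) (w : CW X Y) : Prop :=
  let e : CW X Y → MonoidAlgebra k (CW X Y) := fun m => mono k m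
  let fX := Multiplicative.toAdd mf.1; let gX := Multiplicative.toAdd mg.1
  let L : Multiset X := fX ∪ gX
  let Lf : Multiplicative (Multiset X) := Multiplicative.ofAdd (L - fX)
  let Lg : Multiplicative (Multiset X) := Multiplicative.ofAdd (L - gX)
  -- C₁ : inclusion
  (∃ c d : FreeMonoid Y, mf.2 = c * mg.2 * d ∧
     (mf.2 = mg.2 → (mg.1 = mf.1 ∨ ltC mg.1 mf.1)) ∧ (mg.2 = 1 → c = 1) ∧
     w = (Multiplicative.ofAdd L, mf.2) ∧
     p = e (Lf, 1) * f - e (Lg, c) * g * e (1, d)) ∨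
  -- C₂ : overlap
  (∃ c d c₀ : FreeMonoid Y, c₀ ≠ 1 ∧ mf.2 = c * c₀ ∧ mg.2 = c₀ * d ∧
     w = (Multiplicative.ofAdd L, mf.2 * d) ∧
     p = e (Lf, 1) * f * e (1, d) - e (Lg, c) * g) ∨
  -- C₃ : external
  (∃ c₀ : FreeMonoid Y, fX ∩ gX ≠ 0 ∧ mf.2 ≠ 1 ∧ mg.2 ≠ 1 ∧
     w = (Multiplicative.ofAdd L, mf.2 * c₀ * mg.2) ∧
     p = e (Lf, 1) * f * e (1, c₀ * mg.2) - e (Lg, mf.2 * c₀) * g)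

/-- Gröbner–Shirshov basis in `k[X] ⊗ k⟨Y⟩` in the sense of Mikhalev–Zolotykh. -/
def MZGSB {k X Y : Type*} [Ring k] [DecidableEq X]
    (ltC : Multiplicative (Multiset X) → Multiplicative (Multiset X) → Prop)
    (ltY : FreeMonoid Y → FreeMonoid Y → Prop)
    (S : Set (MonoidAlgebra k (CW X Y))) : Prop :=
  (∀ s ∈ S, MonicR (cwOrd ltC ltY) s) ∧
  ∀ f ∈ S, ∀ g ∈ S, ∀ (mf mg : CW X Y) (p : MonoidAlgebra k (CW X Y)) (w : CW X Y),
    IsLeadR (cwOrd ltC ltY) f mf → IsLeadR (cwOrd ltC ltY) g mg →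
    MZComp ltC f g mf mg p w → TrivModR (cwOrd ltC ltY) S w p

open MonoidAlgebra

section MonoidAlgebra

variable {k M N : Type*}

section Semiring

variable [Semiring k]

lemma mono_eq_single [Monoid M] (m : M) : mono k m = single m 1 :=
  MonoidAlgebra.of_apply k M m

lemma mono_mul_mono [Monoid M] (a b : M) : mono k a * mono k b = mono k (a * b) :=
  (map_mul (MonoidAlgebra.of k M) a b).symm

lemma mono_one [Monoid M] : mono k (1 : M) = 1 :=
  map_one (MonoidAlgebra.of k M)

lemma mono_mul_mul_mono [Monoid M] (a b : M) (f : MonoidAlgebra k M) :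
    mono k a * f * mono k b = mapDomain (fun v => a * v * b) f := by
  induction f using MonoidAlgebra.induction_linear with
  | zero => simp
  | add f g hf hg => rw [mul_add, add_mul, hf, hg, mapDomain_add]
  | single m c => simp [mono_eq_single, single_mul_single]

lemma sum_smul_mono [Monoid M] (f : MonoidAlgebra k M) :
    ∑ v ∈ f.coeff.support, f.coeff v • mono k v = f := by
  conv_rhs => rw [← sum_coeff_single f]
  simp [Finsupp.sum, mono_eq_single, smul_single]

lemma coeff_mapDomain_of_injective {D : M → N} (hD : D.Injective) (f : MonoidAlgebra k M)
    (m : M) : (mapDomain D f).coeff (D m) = f.coeff m :=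
  Finsupp.mapDomain_apply hD f.coeff m

variable {lt : M → M → Prop} {f : MonoidAlgebra k M} {m : M}

lemma IsLeadR.unique [IsStrictOrder M lt] {m' : M} (hm : IsLeadR lt f m)
    (hm' : IsLeadR lt f m') : m = m' := by
  by_contra hne
  exact irrefl m (_root_.trans (hm'.2 m hm.1 hne) (hm.2 m' hm'.1 (Ne.symm hne)))

lemma MonicR.coeff_eq_one [IsStrictOrder M lt] (hf : MonicR lt f) (hm : IsLeadR lt f m) :
    f.coeff m = 1 := by
  obtain ⟨m', hm', h1⟩ := hf
  rwa [hm.unique hm']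

lemma IsLeadR.forall_lt [IsTrans M lt] {w : M} (hf : IsLeadR lt f m) (hm : lt m w) :
    ∀ v ∈ f.coeff.support, lt v w := by
  intro v hv
  rcases eq_or_ne v m with rfl | hne
  · exact hm
  · exact _root_.trans (hf.2 v hv hne) hm

lemma IsLeadR.mapDomain {lt' : N → N → Prop} {D : M → N} (hD : D.Injective)
    (hmono : ∀ u v, lt u v → lt' (D u) (D v)) (hf : IsLeadR lt f m) :
    IsLeadR lt' (MonoidAlgebra.mapDomain D f) (D m) := by
  classical
  have hsupp : (MonoidAlgebra.mapDomain D f).coeff.support = f.coeff.support.image D :=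
    Finsupp.mapDomain_support_of_injective hD f.coeff
  refine ⟨hsupp ▸ Finset.mem_image_of_mem D hf.1, fun u hu hne => ?_⟩
  obtain ⟨v, hv, rfl⟩ := Finset.mem_image.1 (hsupp ▸ hu)
  exact hmono v m (hf.2 v hv fun h => hne (h ▸ rfl))

lemma exists_isLeadR [IsStrictTotalOrder M lt] (hf : f ≠ 0) : ∃ m, IsLeadR lt f m := by
  classical
  let := linearOrderOfSTO lt
  have hne : f.coeff.support.Nonempty :=
    Finsupp.support_nonempty_iff.2 (MonoidAlgebra.coeff_eq_zero.not.2 hf)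
  exact ⟨f.coeff.support.max' hne, Finset.max'_mem _ hne,
    fun u hu hne' => lt_of_le_of_ne (Finset.le_max' _ u hu) hne'⟩

end Semiring

lemma IsLeadR.smul [Field k] {lt : M → M → Prop} {f : MonoidAlgebra k M} {m : M} {c : k}
    (hc : c ≠ 0) (hf : IsLeadR lt f m) : IsLeadR lt (c • f) m := by
  have hsupp : (c • f).coeff.support = f.coeff.support := Finsupp.support_smul_eq hc
  exact ⟨hsupp ▸ hf.1, hsupp ▸ hf.2⟩

lemma forall_mem_support_sub [Ring k] {P : M → Prop} {f g : MonoidAlgebra k M}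
    (hf : ∀ v ∈ f.coeff.support, P v) (hg : ∀ v ∈ g.coeff.support, P v) :
    ∀ v ∈ (f - g).coeff.support, P v := by
  classical
  intro v hv
  rw [MonoidAlgebra.coeff_sub] at hv
  rcases Finset.mem_union.1 (Finsupp.support_sub hv) with h | h
  · exact hf v h
  · exact hg v h

section CancelMonoid

variable [Semiring k] [CancelMonoid M] {lt : M → M → Prop}

lemma mul_mul_injective (a b : M) : (fun v => a * v * b).Injective :=
  fun _ _ h => mul_left_cancel (mul_right_cancel h)

lemma coeff_mono_mul_mul_mono (a b : M) (f : MonoidAlgebra k M) (m : M) :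
    (mono k a * f * mono k b).coeff (a * m * b) = f.coeff m := by
  rw [mono_mul_mul_mono]
  exact coeff_mapDomain_of_injective (mul_mul_injective a b) f m

lemma IsLeadR.mono_mul_mul_mono (hmul : ∀ u v a b : M, lt u v → lt (a * u * b) (a * v * b))
    {f : MonoidAlgebra k M} {m : M} (hf : IsLeadR lt f m) (a b : M) :
    IsLeadR lt (mono k a * f * mono k b) (a * m * b) := by
  rw [_root_.mono_mul_mul_mono]
  exact hf.mapDomain (mul_mul_injective a b) fun u v h => hmul u v a b h

lemma IsLeadR.mono_mul (hmul : ∀ u v a b : M, lt u v → lt (a * u * b) (a * v * b))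
    {f : MonoidAlgebra k M} {m : M} (hf : IsLeadR lt f m) (a : M) :
    IsLeadR lt (mono k a * f) (a * m) := by
  simpa only [mono_one, mul_one] using hf.mono_mul_mul_mono hmul a 1

lemma coeff_mono_mul (a : M) (f : MonoidAlgebra k M) (m : M) :
    (mono k a * f).coeff (a * m) = f.coeff m := by
  simpa only [mono_one, mul_one] using coeff_mono_mul_mul_mono a 1 f m

lemma support_sandwich_sub_lt {k : Type*} [Ring k]
    (hmul : ∀ u v a b : M, lt u v → lt (a * u * b) (a * v * b))
    {f g : MonoidAlgebra k M} {mf mg a₁ b₁ a₂ b₂ w : M}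
    (hf : IsLeadR lt f mf) (hg : IsLeadR lt g mg) (hfg : f.coeff mf = g.coeff mg)
    (h₁ : a₁ * mf * b₁ = w) (h₂ : a₂ * mg * b₂ = w) :
    ∀ v ∈ (mono k a₁ * f * mono k b₁ - mono k a₂ * g * mono k b₂).coeff.support, lt v w := by
  intro v hv
  have hvw : v ≠ w := by
    rintro rfl
    refine Finsupp.mem_support_iff.1 hv ?_
    rw [MonoidAlgebra.coeff_sub, Finsupp.sub_apply, ← h₁, coeff_mono_mul_mul_mono, h₁, ← h₂,
      coeff_mono_mul_mul_mono, hfg, sub_self]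
  have hf' := hf.mono_mul_mul_mono hmul a₁ b₁
  have hg' := hg.mono_mul_mul_mono hmul a₂ b₂
  rw [h₁] at hf'
  rw [h₂] at hg'
  exact forall_mem_support_sub (P := fun u => u = w ∨ lt u w)
    (fun u hu => (eq_or_ne u w).imp_right (hf'.2 u hu))
    (fun u hu => (eq_or_ne u w).imp_right (hg'.2 u hu)) v hv |>.resolve_left hvw

end CancelMonoid

end MonoidAlgebra

section BoundedSpan

variable {k M : Type*} [Field k] [Monoid M]

noncomputable def boundedSpan (lt : M → M → Prop) (S : Set (MonoidAlgebra k M)) (B : Set M) :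
    Submodule k (MonoidAlgebra k M) :=
  Submodule.span k
    {q | ∃ a b s m, s ∈ S ∧ IsLeadR lt s m ∧ a * m * b ∈ B ∧ q = mono k a * s * mono k b}

variable {lt : M → M → Prop} {S : Set (MonoidAlgebra k M)} {B B' : Set M}

lemma mono_mul_mul_mono_mem_boundedSpan {s : MonoidAlgebra k M} {m a b : M} (hs : s ∈ S)
    (hm : IsLeadR lt s m) (hB : a * m * b ∈ B) : mono k a * s * mono k b ∈ boundedSpan lt S B :=
  Submodule.subset_span ⟨a, b, s, m, hs, hm, hB, rfl⟩

lemma boundedSpan_mono (h : B ⊆ B') : boundedSpan lt S B ≤ boundedSpan lt S B' :=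
  Submodule.span_mono fun _ ⟨a, b, s, m, hs, hm, hB, hq⟩ => ⟨a, b, s, m, hs, hm, h hB, hq⟩

lemma mono_mul_mem_boundedSpan {q : MonoidAlgebra k M} (hq : q ∈ boundedSpan lt S B) {y : M}
    (hy : ∀ u ∈ B, y * u ∈ B') : mono k y * q ∈ boundedSpan lt S B' := by
  induction hq using Submodule.span_induction with
  | mem q hq =>
    obtain ⟨a, b, s, m, hs, hm, hB, rfl⟩ := hq
    rw [← mul_assoc, ← mul_assoc, mono_mul_mono]
    exact mono_mul_mul_mono_mem_boundedSpan hs hm (by simpa only [mul_assoc] using hy _ hB)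
  | zero => simp
  | add x y _ _ hx hy => rw [mul_add]; exact add_mem hx hy
  | smul c x _ hx => rw [mul_smul_comm]; exact Submodule.smul_mem _ c hx

lemma TrivModR.of_mem_boundedSpan {w : M} {p : MonoidAlgebra k M}
    (hp : p ∈ boundedSpan lt S {v | lt v w}) : TrivModR lt S w p := by
  obtain ⟨n, α, q, rfl⟩ := Submodule.mem_span_set'.1 hp
  choose a b s m hs hm hw hq using fun i => (q i).2
  exact ⟨n, α, a, b, s, hs, Finset.sum_congr rfl fun i _ => by rw [← hq i],
    fun i => ⟨m i, hm i, hw i⟩⟩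

end BoundedSpan

section Division

variable {k M : Type*} [Field k] [CancelCommMonoid M]

def IsGroebnerBasis (lt : M → M → Prop) (S : Set (MonoidAlgebra k M)) : Prop :=
  ∀ f ∈ Ideal.span S, f ≠ 0 → ∀ mf, IsLeadR lt f mf → ∃ s ∈ S, ∃ ms, IsLeadR lt s ms ∧ ms ∣ mf

/-- The division algorithm. -/
theorem mem_boundedSpan_of_mem_span {lt : M → M → Prop} (hlt : MonOrd lt)
    {S : Set (MonoidAlgebra k M)} (hmonic : ∀ s ∈ S, MonicR lt s) (hGB : IsGroebnerBasis lt S)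
    {B : Set M} (hB : ∀ m ∈ B, ∀ m', lt m' m → m' ∈ B) {G : MonoidAlgebra k M}
    (hG : G ∈ Ideal.span S) (hGsupp : ∀ m ∈ G.coeff.support, m ∈ B) :
    G ∈ boundedSpan lt S B := by
  have := hlt.1
  rcases eq_or_ne G 0 with rfl | hG0
  · exact zero_mem _
  obtain ⟨W, hW⟩ := exists_isLeadR (lt := lt) hG0
  induction W using hlt.2.1.induction generalizing G with
  | _ W ih =>
  obtain ⟨s, hs, ms, hms, r, rfl⟩ := hGB G hG hG0 W hW
  set c := G.coeff (ms * r)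
  have hc : c ≠ 0 := Finsupp.mem_support_iff.1 hW.1
  have hlead : c • (mono k r * s) ∈ boundedSpan lt S B := by
    refine Submodule.smul_mem _ c ?_
    simpa only [mono_one, mul_one] using mono_mul_mul_mono_mem_boundedSpan (b := 1) hs hms
      (by simpa only [mul_one, mul_comm r] using hGsupp _ hW.1)
  have hsupp : ∀ v ∈ (G - c • (mono k r * s)).coeff.support, lt v (ms * r) := by
    have := support_sandwich_sub_lt hlt.2.2 (a₁ := 1) (b₁ := 1) (a₂ := r) (b₂ := 1)
      (w := ms * r) hW (hms.smul hc) (by rw [MonoidAlgebra.coeff_smul, Finsupp.smul_apply,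
        (hmonic s hs).coeff_eq_one hms, smul_eq_mul, mul_one]) (by simp) (by simp [mul_comm])
    rwa [mono_one, one_mul, mul_one, mul_one, mul_smul_comm] at this
  have hrest : G - c • (mono k r * s) ∈ boundedSpan lt S B := by
    rcases eq_or_ne (G - c • (mono k r * s)) 0 with h0 | hne
    · rw [h0]; exact zero_mem _
    obtain ⟨W', hW'⟩ := exists_isLeadR (lt := lt) hne
    refine ih W' (hsupp W' hW'.1) (sub_mem hG ?_)
      (fun m hm => hB _ (hGsupp _ hW.1) m (hsupp m hm)) hne hW'
    exact Submodule.smul_of_tower_mem _ c (Ideal.mul_mem_left _ _ (Ideal.subset_span hs))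
  simpa using add_mem hrest hlead

end Division

lemma List.Lex.append_right_of_length_eq {α : Type*} {r : α → α → Prop} {l₁ l₂ : List α}
    (h : List.Lex r l₁ l₂) (hlen : l₁.length = l₂.length) (t : List α) :
    List.Lex r (l₁ ++ t) (l₂ ++ t) := by
  induction h with
  | nil => simp at hlen
  | cons _ ih => exact List.Lex.cons (ih (by simpa using hlen))
  | rel h => exact List.Lex.rel h

lemma List.eq_or_lex_of_pairwise_le_of_perm {α : Type*} [LinearOrder α] :
    ∀ {l' l : List α}, l'.Pairwise (· ≤ ·) → l'.Perm l → l' = l ∨ List.Lex (· < ·) l' l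
  | [], _, _, hp => .inl hp.nil_eq
  | _ :: _, [], _, hp => absurd hp.symm.nil_eq (by simp)
  | a :: t', b :: t, hs, hp => by
    have hab : a ≤ b := by
      rcases List.mem_cons.1 (hp.symm.subset (List.mem_cons_self ..)) with h | h
      · exact h.ge
      · exact (List.pairwise_cons.1 hs).1 b h
    rcases hab.lt_or_eq with h | rfl
    · exact .inr (.rel h)
    · rcases eq_or_lex_of_pairwise_le_of_perm (List.pairwise_cons.1 hs).2 hp.cons_inv with h | h
      · exact .inl (h ▸ rfl)
      · exact .inr (.cons h)

lemma List.exists_eq_append_cons_of_forall_le {α : Type*} [LinearOrder α] :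
    ∀ {l : List α}, l ≠ [] →
      ∃ c x d, l = c ++ x :: d ∧ (∀ y ∈ l, x ≤ y) ∧ ∀ y ∈ c, x < y
  | [a], _ => ⟨[], a, [], rfl, by simp, by simp⟩
  | a :: b :: l, _ => by
    obtain ⟨c, x, d, hl, hmin, hc⟩ := exists_eq_append_cons_of_forall_le (l := b :: l) (by simp)
    rcases lt_or_ge x a with hxa | hax
    · refine ⟨a :: c, x, d, by rw [hl, List.cons_append], ?_, ?_⟩
      · simpa [hxa.le] using hmin
      · simpa [hxa] using hc
    · exact ⟨[], a, b :: l, rfl, by simpa [hax] using fun y hy => hax.trans (hmin y hy), by simp⟩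

section Words

variable {X : Type*}

lemma gam_mul (u v : FreeMonoid X) : gam (u * v) = gam u * gam v := by
  simp [gam, FreeMonoid.toList_mul, ← Multiset.coe_add]

lemma gam_of_mul_of_comm (i j : X) :
    gam (FreeMonoid.of i * FreeMonoid.of j) = gam (FreeMonoid.of j * FreeMonoid.of i) := by
  rw [gam_mul, gam_mul, mul_comm]

def gamHom : FreeMonoid X →* Multiplicative (Multiset X) where
  toFun := gam
  map_one' := rfl
  map_mul' := gam_mul

lemma gam_eq_gam_iff_perm {u v : FreeMonoid X} : gam u = gam v ↔ u.toList.Perm v.toList :=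
  Multiset.coe_eq_coe

variable [LinearOrder X]

lemma gam_dword (m : Multiplicative (Multiset X)) : gam (dword m) = m := by
  simp [gam, dword, FreeMonoid.toList_ofList, Multiset.sort_eq]

lemma dword_injective : (dword (X := X)).Injective :=
  Function.LeftInverse.injective gam_dword

lemma pairwise_toList_dword (m : Multiplicative (Multiset X)) :
    (dword m).toList.Pairwise (· ≤ ·) := by
  simp [dword, FreeMonoid.toList_ofList, Multiset.pairwise_sort]

lemma dword_gam_of_pairwise {v : FreeMonoid X} (h : v.toList.Pairwise (· ≤ ·)) :
    dword (gam v) = v :=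
  FreeMonoid.toList.injective <| List.Perm.eq_of_pairwise' (pairwise_toList_dword _) h
    (gam_eq_gam_iff_perm.1 (gam_dword (gam v)))

lemma dword_mul_of_forall_le {m m' : Multiplicative (Multiset X)}
    (h : ∀ a ∈ Multiplicative.toAdd m, ∀ b ∈ Multiplicative.toAdd m', a ≤ b) :
    dword (m * m') = dword m * dword m' := by
  rw [← dword_gam_of_pairwise (v := dword m * dword m'), gam_mul, gam_dword, gam_dword]
  rw [FreeMonoid.toList_mul, List.pairwise_append]
  refine ⟨pairwise_toList_dword m, pairwise_toList_dword m', fun a ha b hb => h a ?_ b ?_⟩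
  · simpa [dword, FreeMonoid.toList_ofList] using ha
  · simpa [dword, FreeMonoid.toList_ofList] using hb

end Words

section LiftOrd

variable {X : Type*} [LinearOrder X]
  {ltC : Multiplicative (Multiset X) → Multiplicative (Multiset X) → Prop}

lemma liftOrd_trans (hC : MonOrd ltC) {u v w : FreeMonoid X}
    (h₁ : liftOrd ltC u v) (h₂ : liftOrd ltC v w) : liftOrd ltC u w := by
  have := hC.1
  rcases h₁ with h₁ | ⟨e₁, l₁⟩ <;> rcases h₂ with h₂ | ⟨e₂, l₂⟩
  · exact .inl (_root_.trans h₁ h₂)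
  · exact .inl (e₂ ▸ h₁)
  · exact .inl (e₁ ▸ h₂)
  · exact .inr ⟨e₁.trans e₂, List.lt_trans l₁ l₂⟩

lemma liftOrd_isStrictOrder (hC : MonOrd ltC) : IsStrictOrder (FreeMonoid X) (liftOrd ltC) where
  irrefl u := by
    have := hC.1
    rintro (h | ⟨-, h⟩)
    · exact irrefl _ h
    · exact List.lt_irrefl _ h
  trans _ _ _ := liftOrd_trans hC

lemma liftOrd_mul_mul (hC : MonOrd ltC) (u v a b : FreeMonoid X)
    (h : liftOrd ltC u v) : liftOrd ltC (a * u * b) (a * v * b) := by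
  simp only [liftOrd, gam_mul] at h ⊢
  rcases h with h | ⟨e, l⟩
  · exact .inl (hC.2.2 _ _ _ _ h)
  · refine .inr ⟨by rw [e], ?_⟩
    simpa only [FreeMonoid.toList_mul, List.append_assoc] using
      (l.append_right_of_length_eq (gam_eq_gam_iff_perm.1 e).length_eq b.toList).append_left _
        a.toList

lemma liftOrd_dword_of_lt {m m' : Multiplicative (Multiset X)} (h : ltC m m') :
    liftOrd ltC (dword m) (dword m') :=
  .inl (by rwa [gam_dword, gam_dword])

lemma dword_gam_eq_or_liftOrd (v : FreeMonoid X) :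
    dword (gam v) = v ∨ liftOrd ltC (dword (gam v)) v :=
  (List.eq_or_lex_of_pairwise_le_of_perm (pairwise_toList_dword _)
    (gam_eq_gam_iff_perm.1 (gam_dword (gam v)))).imp (fun h => FreeMonoid.toList.injective h)
    fun h => .inr ⟨gam_dword _, h⟩

end LiftOrd

section FreeAlgebra

variable {k X : Type*}

noncomputable def gamRingHom (k : Type*) [Semiring k] :
    MonoidAlgebra k (FreeMonoid X) →+* MonoidAlgebra k (Multiplicative (Multiset X)) :=
  mapDomainRingHom k gamHom

noncomputable def letterCommutator (k : Type*) [Ring k] (i j : X) :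
    MonoidAlgebra k (FreeMonoid X) :=
  mono k (FreeMonoid.of i * FreeMonoid.of j) - mono k (FreeMonoid.of j * FreeMonoid.of i)

lemma gamRingHom_mono [Semiring k] (v : FreeMonoid X) :
    gamRingHom k (mono k v) = mono k (gam v) := by
  rw [mono_eq_single, mono_eq_single]
  exact mapDomain_single

lemma gamRingHom_letterCommutator [Ring k] (i j : X) :
    gamRingHom k (letterCommutator k i j) = 0 := by
  rw [letterCommutator, map_sub, gamRingHom_mono, gamRingHom_mono, gam_of_mul_of_comm, sub_self]

variable [LinearOrder X] {ltC : Multiplicative (Multiset X) → Multiplicative (Multiset X) → Prop}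

lemma gamRingHom_deltaMap [Semiring k] (F : MonoidAlgebra k (Multiplicative (Multiset X))) :
    gamRingHom k (deltaMap F) = F := by
  change MonoidAlgebra.ofCoeff (Finsupp.mapDomain gam (Finsupp.mapDomain dword F.coeff)) = F
  rw [← Finsupp.mapDomain_comp, show gam ∘ dword = id from funext gam_dword,
    Finsupp.mapDomain_id]

lemma deltaMap_mono [Semiring k] (m : Multiplicative (Multiset X)) :
    deltaMap (mono k m) = mono k (dword m) := by
  simp [deltaMap, mono_eq_single]

lemma IsLeadR.deltaMap [Semiring k] {F : MonoidAlgebra k (Multiplicative (Multiset X))}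
    {W : Multiplicative (Multiset X)} (hF : IsLeadR ltC F W) :
    IsLeadR (liftOrd ltC) (deltaMap F) (dword W) :=
  hF.mapDomain dword_injective fun _ _ => liftOrd_dword_of_lt

lemma coeff_deltaMap_dword [Semiring k] (F : MonoidAlgebra k (Multiplicative (Multiset X)))
    (W : Multiplicative (Multiset X)) : (deltaMap F).coeff (dword W) = F.coeff W :=
  coeff_mapDomain_of_injective dword_injective F W

section Commutator

variable [Ring k] {i j : X}

lemma coeff_letterCommutator (hji : j < i) :
    (letterCommutator k i j).coeff (FreeMonoid.of i * FreeMonoid.of j) = 1 := by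
  have hne : FreeMonoid.of j * FreeMonoid.of i ≠ FreeMonoid.of i * FreeMonoid.of j :=
    fun h => hji.ne (by simpa using congrArg FreeMonoid.toList h : j = i ∧ i = j).1
  simp [letterCommutator, mono_eq_single, hne]

lemma isLeadR_letterCommutator [Nontrivial k] (hji : j < i) :
    IsLeadR (liftOrd ltC) (letterCommutator k i j) (FreeMonoid.of i * FreeMonoid.of j) := by
  classical
  refine ⟨by simp [coeff_letterCommutator hji], fun u hu hne => ?_⟩
  rw [letterCommutator, MonoidAlgebra.coeff_sub] at hu
  have hu' := Finsupp.support_sub hu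
  simp only [mono_eq_single, MonoidAlgebra.coeff_single, Finset.mem_union] at hu'
  obtain rfl : u = FreeMonoid.of j * FreeMonoid.of i := by
    rcases hu' with h | h <;> simpa [hne] using Finsupp.support_single_subset h
  exact .inr ⟨gam_of_mul_of_comm j i, List.Lex.rel hji⟩

end Commutator

end FreeAlgebra

section Straightening

open FreeMonoid (ofList)

variable {k X : Type*} [Field k] [LinearOrder X]
  {ltC : Multiplicative (Multiset X) → Multiplicative (Multiset X) → Prop}
  {S' : Set (MonoidAlgebra k (FreeMonoid X))}

lemma eq_or_liftOrd_trans (hC : MonOrd ltC) {u v w : FreeMonoid X}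
    (h₁ : u = v ∨ liftOrd ltC u v) (h₂ : v = w ∨ liftOrd ltC v w) :
    u = w ∨ liftOrd ltC u w := by
  rcases h₁ with rfl | h₁
  · exact h₂
  · rcases h₂ with rfl | h₂
    · exact .inr h₁
    · exact .inr (liftOrd_trans hC h₁ h₂)

lemma eq_or_liftOrd_mul_left (hC : MonOrd ltC) (a : FreeMonoid X) {u v : FreeMonoid X}
    (h : u = v ∨ liftOrd ltC u v) : a * u = a * v ∨ liftOrd ltC (a * u) (a * v) :=
  h.imp (congrArg _) fun h => by simpa using liftOrd_mul_mul hC _ _ a 1 h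

lemma mono_sub_mono_mem_of_forall_lt (hC : MonOrd ltC) (hcomm : commSet k X ⊆ S') {x : X}
    (d : List X) : ∀ {c : List X}, (∀ y ∈ c, x < y) →
      mono k (ofList (c ++ x :: d)) - mono k (ofList (x :: (c ++ d))) ∈
        boundedSpan (liftOrd ltC) S'
          {u | u = ofList (c ++ x :: d) ∨ liftOrd ltC u (ofList (c ++ x :: d))}
  | [], _ => by simp
  | y :: c, hc => by
    have hxy : x < y := hc y List.mem_cons_self
    let B := {u | u = ofList (y :: c ++ x :: d) ∨ liftOrd ltC u (ofList (y :: c ++ x :: d))}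
    have hshift := mono_mul_mem_boundedSpan (y := FreeMonoid.of y) (B' := B)
      (mono_sub_mono_mem_of_forall_lt hC hcomm d fun z hz => hc z (List.mem_cons_of_mem _ hz))
      fun u hu => eq_or_liftOrd_mul_left hC _ hu
    have hbound : ofList (y :: x :: (c ++ d)) ∈ B := by
      rcases c with _ | ⟨z, c⟩
      · exact .inl rfl
      · exact .inr (.inr ⟨gam_eq_gam_iff_perm.2 (List.perm_middle.symm.cons y),
          .cons (.rel (hc z (by simp)))⟩)
    have hswap := mono_mul_mul_mono_mem_boundedSpan (lt := liftOrd ltC) (B := B) (a := 1)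
      (b := ofList (c ++ d)) (hcomm ⟨y, x, hxy, rfl⟩) (isLeadR_letterCommutator hxy) hbound
    rw [mono_one, one_mul, sub_mul, mono_mul_mono, mono_mul_mono] at hswap
    rw [mul_sub, mono_mul_mono, mono_mul_mono] at hshift
    convert add_mem hshift hswap using 1
    exact (sub_add_sub_cancel _ _ _).symm

lemma mono_sub_mono_dword_gam_mem (hC : MonOrd ltC) (hcomm : commSet k X ⊆ S')
    (v : FreeMonoid X) : mono k v - mono k (dword (gam v)) ∈
      boundedSpan (liftOrd ltC) S' {u | u = v ∨ liftOrd ltC u v} := by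
  suffices ∀ n (l : List X), l.length = n →
      mono k (ofList l) - mono k (dword (gam (ofList l))) ∈
        boundedSpan (liftOrd ltC) S' {u | u = ofList l ∨ liftOrd ltC u (ofList l)} from
    this _ v.toList rfl
  intro n
  induction n with
  | zero =>
    intro l hl
    rw [List.length_eq_zero_iff.1 hl, dword_gam_of_pairwise (by simp), sub_self]
    exact zero_mem _
  | succ n ih =>
    intro l hl
    obtain ⟨c, x, d, rfl, hmin, hc⟩ :=
      List.exists_eq_append_cons_of_forall_le (List.ne_nil_of_length_eq_add_one hl)
    have hperm : (c ++ x :: d).Perm (x :: (c ++ d)) := List.perm_middle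
    have hsort : dword (gam (ofList (c ++ x :: d))) =
        FreeMonoid.of x * dword (gam (ofList (c ++ d))) := by
      have hgam : gam (ofList (c ++ x :: d)) = gam (FreeMonoid.of x * ofList (c ++ d)) :=
        gam_eq_gam_iff_perm.2 hperm
      rw [hgam, gam_mul, dword_mul_of_forall_le, dword_gam_of_pairwise (by simp)]
      intro a ha b hb
      obtain rfl : a = x := by simpa [gam] using ha
      exact hmin b (hperm.symm.subset (List.mem_cons_of_mem _ (by simpa [gam] using hb)))
    have hfront : ofList (x :: (c ++ d)) = ofList (c ++ x :: d) ∨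
        liftOrd ltC (ofList (x :: (c ++ d))) (ofList (c ++ x :: d)) := by
      rcases c with _ | ⟨z, c⟩
      · exact .inl rfl
      · exact .inr (.inr ⟨gam_eq_gam_iff_perm.2 hperm.symm, .rel (hc z (by simp))⟩)
    have hrest := mono_mul_mem_boundedSpan (y := FreeMonoid.of x)
      (B' := {u | u = ofList (c ++ x :: d) ∨ liftOrd ltC u (ofList (c ++ x :: d))})
      (ih (c ++ d) (by simp at hl ⊢; omega))
      fun u hu => eq_or_liftOrd_trans hC (eq_or_liftOrd_mul_left hC _ hu) hfront
    rw [mul_sub, mono_mul_mono, mono_mul_mono, ← hsort, ← FreeMonoid.ofList_cons] at hrest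
    have := add_mem (mono_sub_mono_mem_of_forall_lt hC hcomm d hc) hrest
    rwa [sub_add_sub_cancel] at this

lemma sub_deltaMap_gamRingHom_mem (hC : MonOrd ltC) (hcomm : commSet k X ⊆ S')
    {h : MonoidAlgebra k (FreeMonoid X)} {w : FreeMonoid X}
    (hh : ∀ v ∈ h.coeff.support, liftOrd ltC v w) :
    h - deltaMap (gamRingHom k h) ∈ boundedSpan (liftOrd ltC) S' {v | liftOrd ltC v w} := by
  let D : MonoidAlgebra k (FreeMonoid X) →ₗ[k] MonoidAlgebra k (FreeMonoid X) :=
    LinearMap.id - mapDomainLinearMap k k dword ∘ₗ mapDomainLinearMap k k gam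
  have hD (f : MonoidAlgebra k (FreeMonoid X)) : D f = f - deltaMap (gamRingHom k f) := rfl
  rw [← hD, ← sum_smul_mono h, map_sum]
  refine Submodule.sum_mem _ fun v hv => ?_
  rw [map_smul, hD, gamRingHom_mono, deltaMap_mono]
  refine Submodule.smul_mem _ _ (boundedSpan_mono ?_ (mono_sub_mono_dword_gam_mem hC hcomm v))
  rintro u (rfl | hu)
  exacts [hh u hv, liftOrd_trans hC hu (hh v hv)]

end Straightening

section LiftedBasis

variable {k X : Type*} [Field k] [LinearOrder X]
  {ltC : Multiplicative (Multiset X) → Multiplicative (Multiset X) → Prop}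
  {S : Set (MonoidAlgebra k (Multiplicative (Multiset X)))}

variable (ltC S) in
def liftedBasis : Set (MonoidAlgebra k (FreeMonoid X)) :=
  {p | ∃ s ∈ S, ∃ ms : Multiplicative (Multiset X), IsLeadR ltC s ms ∧
    ∃ u ∈ UU ms, p = deltaMap (mono k u * s)} ∪ commSet k X

variable (ltC S) in
lemma commSet_subset_liftedBasis : commSet k X ⊆ liftedBasis ltC S :=
  Set.subset_union_right

/-- Letters of `u` that are `≤ min ms` go to `lo`, letters `≥ max ms` that exceed `min ms` go to
`hi`, and the remaining ones form `mid ∈ U(ms)`. -/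
lemma exists_mul_mul_eq_of_UU (u ms : Multiplicative (Multiset X)) :
    ∃ lo mid hi, lo * mid * hi = u ∧ mid ∈ UU ms ∧
      dword (u * ms) = dword lo * dword (mid * ms) * dword hi := by
  classical
  let A := Multiplicative.toAdd u
  let Ms := Multiplicative.toAdd ms
  let P : X → Prop := fun y => ∃ z ∈ Ms, z < y
  let Q : X → Prop := fun y => ∃ z ∈ Ms, y < z
  have hlo : ∀ a ∈ A.filter (¬P ·), ∀ z ∈ Ms, a ≤ z := fun a ha z hz =>
    not_lt.1 fun h => (Multiset.mem_filter.1 ha).2 ⟨z, hz, h⟩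
  have hhi : ∀ b ∈ (A.filter P).filter (¬Q ·), ∀ z ∈ Ms, z ≤ b := fun b hb z hz =>
    not_lt.1 fun h => (Multiset.mem_filter.1 hb).2 ⟨z, hz, h⟩
  have hP : ∀ b ∈ A.filter P, P b := fun b hb => (Multiset.mem_filter.1 hb).2
  have hQ : ∀ a ∈ (A.filter P).filter Q, Q a := fun a ha => (Multiset.mem_filter.1 ha).2
  set lo := A.filter (¬P ·)
  set mid := (A.filter P).filter Q
  set hi := (A.filter P).filter (¬Q ·)
  have hu : Multiplicative.ofAdd lo * .ofAdd mid * .ofAdd hi = u := by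
    change Multiplicative.ofAdd (lo + mid + hi) = u
    rw [add_assoc, Multiset.filter_add_not, add_comm, Multiset.filter_add_not]
    rfl
  refine ⟨_, _, _, hu, fun y hy => ⟨hP y (Multiset.mem_of_mem_filter hy), hQ y hy⟩, ?_⟩
  rw [← hu, show Multiplicative.ofAdd lo * .ofAdd mid * .ofAdd hi * ms =
    .ofAdd lo * (.ofAdd mid * ms) * .ofAdd hi by ac_rfl, dword_mul_of_forall_le,
    dword_mul_of_forall_le]
  · simp only [toAdd_mul, toAdd_ofAdd, Multiset.mem_add]
    rintro a ha b (hb | hb)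
    · obtain ⟨z, hz, hzb⟩ := hP b (Multiset.mem_of_mem_filter hb)
      exact (hlo a ha z hz).trans hzb.le
    · exact hlo a ha b hb
  · simp only [toAdd_mul, toAdd_ofAdd, Multiset.mem_add]
    rintro a (ha | ha | ha) b hb
    · obtain ⟨z, hz, hzb⟩ := hP b (Multiset.mem_of_mem_filter hb)
      exact (hlo a ha z hz).trans hzb.le
    · obtain ⟨z, hz, haz⟩ := hQ a ha
      exact haz.le.trans (hhi b hb z hz)
    · exact hhi b hb a ha

lemma deltaMap_mono_mul_mem_boundedSpan (hC : MonOrd ltC)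
    {s : MonoidAlgebra k (Multiplicative (Multiset X))} {ms : Multiplicative (Multiset X)}
    (hs : s ∈ S) (hms : IsLeadR ltC s ms) (u : Multiplicative (Multiset X)) {w : FreeMonoid X}
    (hw : liftOrd ltC (dword (u * ms)) w) :
    deltaMap (mono k u * s) ∈
      boundedSpan (liftOrd ltC) (liftedBasis ltC S) {v | liftOrd ltC v w} := by
  have := liftOrd_isStrictOrder hC
  obtain ⟨lo, mid, hi, rfl, hmid, hsplit⟩ := exists_mul_mul_eq_of_UU u ms
  have hmid_lead := (hms.mono_mul hC.2.2 mid).deltaMap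
  set q := mono k (dword lo) * deltaMap (mono k mid * s) * mono k (dword hi)
  have hq : q ∈ boundedSpan (liftOrd ltC) (liftedBasis ltC S) {v | liftOrd ltC v w} :=
    mono_mul_mul_mono_mem_boundedSpan (.inl ⟨s, hs, ms, hms, mid, hmid, rfl⟩) hmid_lead
      (hsplit ▸ hw)
  have hq_lead : IsLeadR (liftOrd ltC) q (dword (lo * mid * hi * ms)) :=
    hsplit ▸ hmid_lead.mono_mul_mul_mono (liftOrd_mul_mul hC) _ _
  have hγ : gamRingHom k (deltaMap (mono k (lo * mid * hi) * s) - q) = 0 := by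
    simp only [q, map_sub, map_mul, gamRingHom_deltaMap, gamRingHom_mono, gam_dword,
      ← mono_mul_mono]
    ring
  have hrest := sub_deltaMap_gamRingHom_mem hC (commSet_subset_liftedBasis ltC S)
    (forall_mem_support_sub ((hms.mono_mul hC.2.2 _).deltaMap.forall_lt hw) (hq_lead.forall_lt hw))
  rw [hγ, show deltaMap (0 : MonoidAlgebra k (Multiplicative (Multiset X))) = 0 by simp [deltaMap],
    sub_zero] at hrest
  simpa using add_mem hrest hq

theorem mem_boundedSpan_liftedBasis (hC : MonOrd ltC) (hmonic : ∀ s ∈ S, MonicR ltC s)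
    (hGB : IsGroebnerBasis ltC S) {p : MonoidAlgebra k (FreeMonoid X)} {w : FreeMonoid X}
    (hp : ∀ v ∈ p.coeff.support, liftOrd ltC v w) (hγ : gamRingHom k p ∈ Ideal.span S) :
    p ∈ boundedSpan (liftOrd ltC) (liftedBasis ltC S) {v | liftOrd ltC v w} := by
  classical
  have hγ_supp : ∀ m ∈ (gamRingHom k p).coeff.support, liftOrd ltC (dword m) w := by
    intro m hm
    obtain ⟨v, hv, rfl⟩ := Finset.mem_image.1 (Finsupp.mapDomain_support hm)
    change liftOrd ltC (dword (gam v)) w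
    rcases dword_gam_eq_or_liftOrd (ltC := ltC) v with h | h
    · rw [h]; exact hp v hv
    · exact liftOrd_trans hC h (hp v hv)
  have hdiv := mem_boundedSpan_of_mem_span hC hmonic hGB
    (B := {m | liftOrd ltC (dword m) w})
    (fun _ hm _ h => liftOrd_trans hC (liftOrd_dword_of_lt h) hm) hγ hγ_supp
  have hδ : deltaMap (gamRingHom k p) ∈
      boundedSpan (liftOrd ltC) (liftedBasis ltC S) {v | liftOrd ltC v w} := by
    refine (Submodule.map_span_le (mapDomainLinearMap k k dword) _ _).2 ?_
      (Submodule.mem_map_of_mem hdiv)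
    rintro _ ⟨a, b, s, ms, hs, hms, hB, rfl⟩
    rw [mul_right_comm, mono_mul_mono]
    exact deltaMap_mono_mul_mem_boundedSpan hC hs hms _ (by rwa [mul_right_comm] at hB)
  simpa using add_mem (sub_deltaMap_gamRingHom_mem hC (commSet_subset_liftedBasis ltC S) hp) hδ

lemma monicR_of_mem_liftedBasis (hC : MonOrd ltC) (hmonic : ∀ s ∈ S, MonicR ltC s)
    {f : MonoidAlgebra k (FreeMonoid X)} (hf : f ∈ liftedBasis ltC S) :
    MonicR (liftOrd ltC) f := by
  have := hC.1
  rcases hf with ⟨s, hs, ms, hms, u, -, rfl⟩ | ⟨i, j, hji, rfl⟩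
  · exact ⟨_, (hms.mono_mul hC.2.2 u).deltaMap, by
      rw [coeff_deltaMap_dword, coeff_mono_mul, (hmonic s hs).coeff_eq_one hms]⟩
  · exact ⟨_, isLeadR_letterCommutator hji, coeff_letterCommutator hji⟩

lemma gamRingHom_mem_span_of_mem_liftedBasis {f : MonoidAlgebra k (FreeMonoid X)}
    (hf : f ∈ liftedBasis ltC S) : gamRingHom k f ∈ Ideal.span S := by
  rcases hf with ⟨s, hs, ms, hms, u, -, rfl⟩ | ⟨i, j, hji, rfl⟩
  · rw [gamRingHom_deltaMap]
    exact Ideal.mul_mem_left _ _ (Ideal.subset_span hs)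
  · exact (gamRingHom_letterCommutator (k := k) i j) ▸ zero_mem _

/-- Both kinds of compositions in `FIsGSB` have this shape. -/
theorem trivModR_liftedBasis (hC : MonOrd ltC) (hmonic : ∀ s ∈ S, MonicR ltC s)
    (hGB : IsGroebnerBasis ltC S) {f g : MonoidAlgebra k (FreeMonoid X)}
    (hf : f ∈ liftedBasis ltC S) (hg : g ∈ liftedBasis ltC S) {mf mg a₁ b₁ a₂ b₂ w : FreeMonoid X}
    (hmf : IsLeadR (liftOrd ltC) f mf) (hmg : IsLeadR (liftOrd ltC) g mg)
    (h₁ : a₁ * mf * b₁ = w) (h₂ : a₂ * mg * b₂ = w) :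
    TrivModR (liftOrd ltC) (liftedBasis ltC S) w
      (mono k a₁ * f * mono k b₁ - mono k a₂ * g * mono k b₂) := by
  have := liftOrd_isStrictOrder hC
  refine .of_mem_boundedSpan (mem_boundedSpan_liftedBasis hC hmonic hGB ?_ ?_)
  · refine support_sandwich_sub_lt (liftOrd_mul_mul hC) hmf hmg ?_ h₁ h₂
    rw [(monicR_of_mem_liftedBasis hC hmonic hf).coeff_eq_one hmf,
      (monicR_of_mem_liftedBasis hC hmonic hg).coeff_eq_one hmg]
  · simp only [map_sub, map_mul]
    exact sub_mem
      (Ideal.mul_mem_right _ _ (Ideal.mul_mem_left _ _ (gamRingHom_mem_span_of_mem_liftedBasis hf)))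
      (Ideal.mul_mem_right _ _ (Ideal.mul_mem_left _ _ (gamRingHom_mem_span_of_mem_liftedBasis hg)))

end LiftedBasis

theorem stmt_14_general {k X : Type*} [Field k] [LinearOrder X]
    (ltC : Multiplicative (Multiset X) → Multiplicative (Multiset X) → Prop)
    (hC : MonOrd ltC)
    (S : Set (MonoidAlgebra k (Multiplicative (Multiset X))))
    (hmonic : ∀ s ∈ S, MonicR ltC s)
    (hGB : ∀ f ∈ Ideal.span S, f ≠ 0 → ∀ mf : Multiplicative (Multiset X),
      IsLeadR ltC f mf → ∃ s ∈ S, ∃ ms : Multiplicative (Multiset X),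
        IsLeadR ltC s ms ∧ ms ∣ mf) :
    FIsGSB (liftOrd ltC)
      ({p : MonoidAlgebra k (FreeMonoid X) | ∃ s ∈ S,
          ∃ ms : Multiplicative (Multiset X), IsLeadR ltC s ms ∧
          ∃ u ∈ UU ms, p = deltaMap (mono k u * s)} ∪ commSet k X) := by
  change FIsGSB (liftOrd ltC) (liftedBasis ltC S)
  refine ⟨fun f hf => monicR_of_mem_liftedBasis hC hmonic hf,
    fun f hf g hg mf mg hmf hmg => ⟨fun a b hab _ => ?_, fun a b hab => ?_⟩⟩
  · simpa only [mono_one, one_mul, mul_one] using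
      trivModR_liftedBasis hC hmonic hGB hf hg hmf hmg (a₁ := 1) (b₂ := 1) (w := mf * b)
        (by rw [one_mul]) (by rw [mul_one, hab])
  · simpa only [mono_one, one_mul, mul_one] using
      trivModR_liftedBasis hC hmonic hGB hf hg hmf hmg (a₁ := 1) (b₁ := 1) (w := mf) (by simp)
        hab.symm

/-- Eisenbud–Peeva–Sturmfels: if `S` is a minimal Gröbner basis in the
polynomial ring `k[X]` (with respect to a monomial order on `[X]`), then
`S' = {δ(u·s) : s ∈ S, u ∈ U(s̄)} ∪ {xᵢxⱼ - xⱼxᵢ : i > j}` is a Gröbner–Shirshov basis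
in the free algebra `k⟨X⟩` with respect to the lifted order on `X*`. -/
theorem stmt_14 {k X : Type*} [Field k] [LinearOrder X]
    (hwf : WellFounded ((· < ·) : X → X → Prop))
    (ltC : Multiplicative (Multiset X) → Multiplicative (Multiset X) → Prop)
    (hC : MonOrd ltC)
    (S : Set (MonoidAlgebra k (Multiplicative (Multiset X))))
    (hmonic : ∀ s ∈ S, MonicR ltC s)
    (hGB : ∀ f ∈ Ideal.span S, f ≠ 0 → ∀ mf : Multiplicative (Multiset X),
      IsLeadR ltC f mf → ∃ s ∈ S, ∃ ms : Multiplicative (Multiset X),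
        IsLeadR ltC s ms ∧ ms ∣ mf)
    (hmin : ∀ s ∈ S, ∀ t ∈ S, s ≠ t → ∀ ms mt : Multiplicative (Multiset X),
      IsLeadR ltC s ms → IsLeadR ltC t mt → ¬ ms ∣ mt) :
    FIsGSB (liftOrd ltC)
      ({p : MonoidAlgebra k (FreeMonoid X) | ∃ s ∈ S,
          ∃ ms : Multiplicative (Multiset X), IsLeadR ltC s ms ∧
          ∃ u ∈ UU ms, p = deltaMap (mono k u * s)} ∪ commSet k X) :=
  stmt_14_general ltC hC S hmonic hGB
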